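/- For 0 < q < p ≤ 1, real α, β with 0 ≤ α ≤ β, n ≥ 1, and x ∈ [0,1], the centered second moment satisfies S_{n,p,q}((t−x)²; x) = ((q[n]_{p,q}[n−1]_{p,q} − [n]_{p,q}² + β²)/([n]_{p,q}+β)²) x² + (([n]_{p,q} p^{n−1} − 2αβ)/([n]_{p,q}+β)²) x + α²/([n]_{p,q}+β)². -/

import Mathlib

open Finset

noncomputable def pqInt (p q : ℝ) (m : ℕ) : ℝ :=
  ∑ i ∈ Finset.range m, p ^ (m - 1 - i) * q ^ i

noncomputable def pqFact (p q : ℝ) (n : ℕ) : ℝ :=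
  ∏ j ∈ Finset.range n, pqInt p q (j + 1)

noncomputable def pqChoose (p q : ℝ) (n k : ℕ) : ℝ :=
  pqFact p q n / (pqFact p q k * pqFact p q (n - k))

noncomputable def pqBasis (p q : ℝ) (n k : ℕ) (x : ℝ) : ℝ :=
  pqChoose p q n k * (p ^ (k * (k - 1) / 2) / p ^ (n * (n - 1) / 2)) * x ^ k *
    ∏ s ∈ Finset.range (n - k), (p ^ s - q ^ s * x)

noncomputable def pqNode (p q α β : ℝ) (n k : ℕ) : ℝ :=
  (p ^ (n - k) * pqInt p q k + α) / (pqInt p q n + β)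

noncomputable def pqStancu (p q α β : ℝ) (n : ℕ) (f : ℝ → ℝ) (x : ℝ) : ℝ :=
  ∑ k ∈ Finset.range (n + 1), pqBasis p q n k x * f (pqNode p q α β n k)

/-!
Write the basis functions as numerators over `p ^ (n * (n - 1) / 2)`. Pascal's rule for the
(p,q)-binomial coefficients splits each numerator of order `n + 1` into two pieces of order `n`
that telescope, so the row sum of the numerators gets multiplied by `p ^ n`: the basis is a
partition of unity. The absorption identity `[n+1 choose k+1] [k+1] = [n+1] [n choose k]` turns
a sum weighted by the node numerator `p ^ (n + 1 - k) [k]` into `[n+1] x` times a sum of order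
`n`; with `[k+1] = p ^ k + q [k]` this gives the first two moments, and expanding
`((a_k + α) / ([n] + β) - x) ^ 2` gives the formula.
-/

theorem pqInt_eq_geom_sum₂ (p q : ℝ) (m : ℕ) :
    pqInt p q m = ∑ i ∈ range m, q ^ i * p ^ (m - 1 - i) :=
  Finset.sum_congr rfl fun _ _ => mul_comm _ _

theorem pqInt_comm (p q : ℝ) (m : ℕ) : pqInt p q m = pqInt q p m := by
  rw [pqInt_eq_geom_sum₂, pqInt, ← Finset.sum_range_reflect]
  refine Finset.sum_congr rfl fun i hi => ?_
  rw [show m - 1 - (m - 1 - i) = i by grind]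

theorem pqInt_zero (p q : ℝ) : pqInt p q 0 = 0 :=
  Finset.sum_range_zero _

theorem pqInt_succ (p q : ℝ) (m : ℕ) : pqInt p q (m + 1) = q ^ m + p * pqInt p q m := by
  simpa only [pqInt_eq_geom_sum₂, Nat.add_sub_cancel] using geom_sum₂_succ_eq q p

theorem pqInt_succ' (p q : ℝ) (m : ℕ) : pqInt p q (m + 1) = p ^ m + q * pqInt p q m := by
  rw [pqInt_comm, pqInt_succ, pqInt_comm]

theorem pqInt_add (p q : ℝ) (a b : ℕ) :
    pqInt p q (a + b) = p ^ a * pqInt p q b + q ^ b * pqInt p q a := by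
  induction b with
  | zero => simp [pqInt_zero]
  | succ b ih => rw [← add_assoc, pqInt_succ', ih, pqInt_succ']; ring

theorem pqInt_succ_pos {p q : ℝ} (hp : 0 < p) (hq : 0 ≤ q) (m : ℕ) :
    0 < pqInt p q (m + 1) := by
  induction m with
  | zero => simp [pqInt]
  | succ m ih => rw [pqInt_succ']; positivity

theorem pqFact_zero (p q : ℝ) : pqFact p q 0 = 1 :=
  Finset.prod_range_zero _

theorem pqFact_succ (p q : ℝ) (n : ℕ) : pqFact p q (n + 1) = pqFact p q n * pqInt p q (n + 1) :=
  Finset.prod_range_succ _ _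

theorem pqFact_pos {p q : ℝ} (hp : 0 < p) (hq : 0 ≤ q) (n : ℕ) : 0 < pqFact p q n :=
  Finset.prod_pos fun j _ => pqInt_succ_pos hp hq j

theorem pow_triangle_succ {M : Type*} [Monoid M] (a : M) (n : ℕ) :
    a ^ ((n + 1) * (n + 1 - 1) / 2) = a ^ (n * (n - 1) / 2) * a ^ n := by
  rw [← Finset.sum_range_id, ← Finset.sum_range_id, Finset.sum_range_succ, pow_add]

section pqChoose

variable {p q : ℝ} (hp : 0 < p) (hq : 0 ≤ q)
include hp hq

theorem pqChoose_zero_right (n : ℕ) : pqChoose p q n 0 = 1 := by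
  simp [pqChoose, pqFact_zero, (pqFact_pos hp hq n).ne']

theorem pqChoose_self (n : ℕ) : pqChoose p q n n = 1 := by
  simp [pqChoose, pqFact_zero, (pqFact_pos hp hq n).ne']

-- `k < n` matters: `pqChoose p q n (n + 1)` is not `0`, because `n - (n + 1)` truncates to `0`.
theorem pqChoose_succ_succ {n k : ℕ} (hk : k < n) :
    pqChoose p q (n + 1) (k + 1) =
      p ^ (k + 1) * pqChoose p q n (k + 1) + q ^ (n - k) * pqChoose p q n k := by
  obtain ⟨d, rfl⟩ : ∃ d, n = k + d + 1 := ⟨n - k - 1, by omega⟩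
  have hsucc : pqInt p q (k + d + 1 + 1) =
      p ^ (k + 1) * pqInt p q (d + 1) + q ^ (d + 1) * pqInt p q (k + 1) := by
    rw [← pqInt_add]; ring_nf
  simp only [pqChoose, show k + d + 1 + 1 - (k + 1) = d + 1 by omega,
    show k + d + 1 - (k + 1) = d by omega, show k + d + 1 - k = d + 1 by omega,
    pqFact_succ _ _ (k + d + 1), pqFact_succ _ _ k, pqFact_succ _ _ d, hsucc]
  have := (pqFact_pos hp hq k).ne'
  have := (pqFact_pos hp hq d).ne'
  have := (pqInt_succ_pos hp hq k).ne'
  have := (pqInt_succ_pos hp hq d).ne'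
  field_simp

theorem pqChoose_succ_mul_pqInt (n k : ℕ) :
    pqChoose p q (n + 1) (k + 1) * pqInt p q (k + 1) = pqInt p q (n + 1) * pqChoose p q n k := by
  have := (pqFact_pos hp hq k).ne'
  have := (pqFact_pos hp hq (n - k)).ne'
  have := (pqInt_succ_pos hp hq k).ne'
  rw [pqChoose, pqChoose, Nat.add_sub_add_right, pqFact_succ, pqFact_succ]
  field_simp

end pqChoose

theorem Finset.sum_range_succ_eq_sum_add_of_shift {M : Type*} [AddCommMonoid M] {f u v : ℕ → M}
    {n : ℕ} (h_zero : f 0 = u 0) (h_succ : ∀ k < n, f (k + 1) = u (k + 1) + v k)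
    (h_last : f (n + 1) = v n) :
    ∑ k ∈ range (n + 2), f k = ∑ k ∈ range (n + 1), (u k + v k) := by
  rw [sum_range_succ, sum_range_succ', sum_congr rfl fun k hk => h_succ k (mem_range.1 hk),
    sum_add_distrib, sum_add_distrib, sum_range_succ' u, sum_range_succ v, h_zero, h_last]
  abel

noncomputable def pqBasisNum (p q : ℝ) (n k : ℕ) (x : ℝ) : ℝ :=
  pqChoose p q n k * p ^ (k * (k - 1) / 2) * x ^ k * ∏ s ∈ range (n - k), (p ^ s - q ^ s * x)

theorem pqBasis_eq_div (p q : ℝ) (n k : ℕ) (x : ℝ) :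
    pqBasis p q n k x = pqBasisNum p q n k x / p ^ (n * (n - 1) / 2) := by
  rw [pqBasis, pqBasisNum]; ring

section pqBasis

variable {p q : ℝ} (hp : 0 < p) (hq : 0 ≤ q) (x : ℝ)
include hp hq

theorem pqBasisNum_succ_zero (n : ℕ) :
    pqBasisNum p q (n + 1) 0 x = (p ^ n - q ^ n * x) * pqBasisNum p q n 0 x := by
  simp only [pqBasisNum, pqChoose_zero_right hp hq, Nat.sub_zero, prod_range_succ]
  ring

theorem pqBasisNum_succ_self (n : ℕ) :
    pqBasisNum p q (n + 1) (n + 1) x = p ^ n * x * pqBasisNum p q n n x := by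
  simp only [pqBasisNum, pqChoose_self hp hq, Nat.sub_self, pow_triangle_succ]
  ring

theorem pqBasisNum_succ_succ {n k : ℕ} (hk : k < n) :
    pqBasisNum p q (n + 1) (k + 1) x =
      (p ^ n - p ^ (k + 1) * q ^ (n - (k + 1)) * x) * pqBasisNum p q n (k + 1) x +
        p ^ k * q ^ (n - k) * x * pqBasisNum p q n k x := by
  have hprod : ∏ s ∈ range (n - k), (p ^ s - q ^ s * x) =
      (∏ s ∈ range (n - (k + 1)), (p ^ s - q ^ s * x)) *
        (p ^ (n - (k + 1)) - q ^ (n - (k + 1)) * x) := by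
    rw [← prod_range_succ, show n - (k + 1) + 1 = n - k by omega]
  have hpow : p ^ n = p ^ (k + 1) * p ^ (n - (k + 1)) := by rw [← pow_add]; congr 1; omega
  simp only [pqBasisNum, pqChoose_succ_succ hp hq hk, Nat.add_sub_add_right, pow_triangle_succ,
    hprod, hpow]
  ring

theorem sum_pqBasisNum (n : ℕ) :
    ∑ k ∈ range (n + 1), pqBasisNum p q n k x = p ^ (n * (n - 1) / 2) := by
  induction n with
  | zero => simp [pqBasisNum, pqChoose, pqFact_zero]
  | succ n ih =>
    rw [Finset.sum_range_succ_eq_sum_add_of_shift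
      (u := fun k => (p ^ n - p ^ k * q ^ (n - k) * x) * pqBasisNum p q n k x)
      (v := fun k => p ^ k * q ^ (n - k) * x * pqBasisNum p q n k x)
      (by simpa using pqBasisNum_succ_zero hp hq x n)
      (fun k hk => pqBasisNum_succ_succ hp hq x hk)
      (by simpa using pqBasisNum_succ_self hp hq x n)]
    simp only [← add_mul, sub_add_cancel, ← mul_sum, ih, pow_triangle_succ]
    ring

theorem sum_pqBasis (n : ℕ) : ∑ k ∈ range (n + 1), pqBasis p q n k x = 1 := by
  simp only [pqBasis_eq_div, ← sum_div, sum_pqBasisNum hp hq, div_self (pow_pos hp _).ne']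

theorem pqBasis_succ_mul_pqInt {n k : ℕ} (hk : k ≤ n) :
    pqBasis p q (n + 1) (k + 1) x * (p ^ (n - k) * pqInt p q (k + 1)) =
      pqInt p q (n + 1) * x * pqBasis p q n k x := by
  have hpow : p ^ n = p ^ k * p ^ (n - k) := by rw [← pow_add, Nat.add_sub_cancel' hk]
  have := (pow_pos hp (n * (n - 1) / 2)).ne'
  have := (pow_pos hp (n - k)).ne'
  simp only [pqBasis, Nat.add_sub_add_right, pow_triangle_succ, hpow]
  set P := ∏ s ∈ range (n - k), (p ^ s - q ^ s * x)
  field_simp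
  linear_combination x ^ (k + 1) * P * pqChoose_succ_mul_pqInt hp hq n k

end pqBasis

section moments

variable {p q : ℝ} (hp : 0 < p) (hq : 0 ≤ q) (x : ℝ)
include hp hq

theorem sum_pqBasis_succ_mul_node_mul (n : ℕ) (g : ℕ → ℝ) :
    ∑ k ∈ range (n + 2), pqBasis p q (n + 1) k x * (p ^ (n + 1 - k) * pqInt p q k) * g k =
      pqInt p q (n + 1) * x * ∑ k ∈ range (n + 1), pqBasis p q n k x * g (k + 1) := by
  rw [sum_range_succ', pqInt_zero, mul_zero, mul_zero, zero_mul, add_zero, mul_sum]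
  refine sum_congr rfl fun k hk => ?_
  rw [Nat.add_sub_add_right, pqBasis_succ_mul_pqInt hp hq x (Nat.lt_succ_iff.1 (mem_range.1 hk))]
  ring

theorem sum_pqBasis_mul_node (n : ℕ) :
    ∑ k ∈ range (n + 1), pqBasis p q n k x * (p ^ (n - k) * pqInt p q k) = pqInt p q n * x := by
  cases n with
  | zero => simp [pqInt_zero]
  | succ n => simpa [sum_pqBasis hp hq] using sum_pqBasis_succ_mul_node_mul hp hq x n fun _ => 1

theorem sum_pqBasis_succ_mul_node_sq (n : ℕ) :
    ∑ k ∈ range (n + 2), pqBasis p q (n + 1) k x * (p ^ (n + 1 - k) * pqInt p q k) ^ 2 =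
      pqInt p q (n + 1) * x * (p ^ n + q * pqInt p q n * x) := by
  have hnode : ∀ k ∈ range (n + 1),
      pqBasis p q n k x * (p ^ (n + 1 - (k + 1)) * pqInt p q (k + 1)) =
        p ^ n * pqBasis p q n k x + q * (pqBasis p q n k x * (p ^ (n - k) * pqInt p q k)) := by
    intro k hk
    have hpow : p ^ n = p ^ (n - k) * p ^ k := by
      rw [← pow_add, Nat.sub_add_cancel (Nat.lt_succ_iff.1 (mem_range.1 hk))]
    rw [Nat.add_sub_add_right, pqInt_succ', hpow]
    ring
  rw [sum_congr rfl fun k _ => by rw [sq, ← mul_assoc], sum_pqBasis_succ_mul_node_mul hp hq x n,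
    sum_congr rfl hnode, sum_add_distrib, ← mul_sum, ← mul_sum, sum_pqBasis hp hq,
    sum_pqBasis_mul_node hp hq]
  ring

end moments

theorem pqStancu_centered_sq_general (p q α β x : ℝ) (hq : 0 < q) (hqp : q < p)
    (hα : 0 ≤ α) (hαβ : α ≤ β) (n : ℕ) (hn : 1 ≤ n) :
    pqStancu p q α β n (fun t => (t - x) ^ 2) x =
      ((q * pqInt p q n * pqInt p q (n - 1) - pqInt p q n ^ 2 + β ^ 2) /
          (pqInt p q n + β) ^ 2) * x ^ 2 +
        ((pqInt p q n * p ^ (n - 1) - 2 * α * β) / (pqInt p q n + β) ^ 2) * x +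
        α ^ 2 / (pqInt p q n + β) ^ 2 := by
  obtain ⟨n, rfl⟩ : ∃ m, n = m + 1 := ⟨n - 1, by omega⟩
  have hp : 0 < p := hq.trans hqp
  set N := pqInt p q (n + 1)
  have hD : N + β ≠ 0 :=
    (add_pos_of_pos_of_nonneg (pqInt_succ_pos hp hq.le n) (hα.trans hαβ)).ne'
  have hterm : ∀ k ∈ range (n + 2), pqBasis p q (n + 1) k x *
      ((p ^ (n + 1 - k) * pqInt p q k + α) / (N + β) - x) ^ 2 =
      (pqBasis p q (n + 1) k x * (p ^ (n + 1 - k) * pqInt p q k) ^ 2 +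
        2 * (α - (N + β) * x) * (pqBasis p q (n + 1) k x * (p ^ (n + 1 - k) * pqInt p q k)) +
        (α - (N + β) * x) ^ 2 * pqBasis p q (n + 1) k x) / (N + β) ^ 2 := by
    intro k _
    field_simp
    ring
  rw [pqStancu, show n + 1 + 1 = n + 2 from rfl]
  simp only [pqNode]
  rw [sum_congr rfl hterm, ← sum_div, sum_add_distrib, sum_add_distrib, ← mul_sum,
    ← mul_sum, sum_pqBasis_succ_mul_node_sq hp hq.le, sum_pqBasis_mul_node hp hq.le,
    sum_pqBasis hp hq.le, Nat.add_sub_cancel]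
  field_simp
  ring

theorem pqStancu_centered_sq (p q α β x : ℝ) (hq : 0 < q) (hqp : q < p) (hp : p ≤ 1)
    (hα : 0 ≤ α) (hαβ : α ≤ β) (n : ℕ) (hn : 1 ≤ n) (hx : x ∈ Set.Icc (0 : ℝ) 1) :
    pqStancu p q α β n (fun t => (t - x) ^ 2) x =
      ((q * pqInt p q n * pqInt p q (n - 1) - pqInt p q n ^ 2 + β ^ 2) /
          (pqInt p q n + β) ^ 2) * x ^ 2 +
        ((pqInt p q n * p ^ (n - 1) - 2 * α * β) / (pqInt p q n + β) ^ 2) * x +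
        α ^ 2 / (pqInt p q n + β) ^ 2 :=
  pqStancu_centered_sq_general p q α β x hq hqp hα hαβ n hn
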